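/- arXiv:1909.03407 — 5 statements merged into one kernel-verified Lean document; each statement's English description precedes it below -/
import Mathlib

section
/- Let F/k be a Galois extension of number fields of degree 2, with nontrivial automorphism τ ∈ Gal(F/k), and let p be a prime number that does not divide the class number h(k) = |Cl(k)| of k. Then τ acts as inversion on the ideal classes of F of p-power order: for every nonzero ideal I of 𝓞_F whose ideal class [I] ∈ Cl(F) has order a power of p, one has [I]·[τ(I)] = 1 in Cl(F). -/
/-!
For `x ∈ I` the element `x * τ x` is `τ`-invariant, hence lies in `𝓞 k`, so the ideal these elements
generate is extended from `𝓞 k`. It equals `I * τ(I)`: this can be checked after localizing at each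
maximal ideal of `𝓞 k`, where `𝓞 F` becomes a principal ideal domain, `I = (y)` and
`I * τ(I) = (y * τ y)`. So `[I][τ(I)]` is killed by `h(k)`; it is also killed by a power of `p`,
because `[τ(I)]` is the image of `[I]` under a ring automorphism.
-/

open NumberField
open scoped nonZeroDivisors

theorem Ideal.le_of_localization_algebraMapSubmonoid_maximal {R S : Type*} [CommRing R]
    [CommRing S] [Algebra R S] {A B : Ideal S}
    (h : ∀ (P : Ideal R) [P.IsMaximal],
      A.map (algebraMap S (Localization (Algebra.algebraMapSubmonoid S P.primeCompl))) ≤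
        B.map (algebraMap S (Localization (Algebra.algebraMapSubmonoid S P.primeCompl)))) :
    A ≤ B := by
  intro a ha
  refine Submodule.mem_of_localization_maximal
    (fun P _ => Localization (Algebra.algebraMapSubmonoid S P.primeCompl))
    (fun P _ => (IsScalarTower.toAlgHom R S _).toLinearMap) a (B.restrictScalars R) fun P _ => ?_
  obtain ⟨⟨b, ⟨_, r, hr, rfl⟩⟩, hb⟩ :=
    (IsLocalization.mem_map_algebraMap_iff (Algebra.algebraMapSubmonoid S P.primeCompl) _).mp
      (h P (Ideal.mem_map_of_mem _ ha))
  refine ⟨b, b.2, ⟨r, hr⟩, ?_⟩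
  rw [← IsLocalization.mk'_algebraMap_eq_mk', IsLocalization.mk'_eq_iff_eq_mul]
  exact hb.symm

theorem Ideal.mul_map_le_of_isPrincipal {T : Type*} [CommRing T] (τ : T →+* T) {J K : Ideal T}
    (hJ : J.IsPrincipal) (h : ∀ z ∈ J, z * τ z ∈ K) : J * J.map τ ≤ K := by
  obtain ⟨y, rfl⟩ := hJ
  rw [Ideal.submodule_span_eq, Ideal.map_span, Set.image_singleton,
    Ideal.span_singleton_mul_span_singleton, Ideal.span_singleton_le_iff_mem]
  exact h y (Ideal.mem_span_singleton_self y)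

theorem IsLocalization.mul_apply_mem_map_span_image {S Sₘ : Type*} [CommRing S] [CommRing Sₘ]
    [Algebra S Sₘ] (M : Submonoid S) [IsLocalization M Sₘ] (σ : S →+* S) (τ : Sₘ →+* Sₘ)
    (hσM : M ≤ M.comap σ) (hτ : ∀ x, τ (algebraMap S Sₘ x) = algebraMap S Sₘ (σ x))
    {I : Ideal S} {z : Sₘ} (hz : z ∈ I.map (algebraMap S Sₘ)) :
    z * τ z ∈ (Ideal.span ((fun x => x * σ x) '' I)).map (algebraMap S Sₘ) := by
  obtain ⟨⟨x, s⟩, hxs⟩ := (IsLocalization.mem_map_algebraMap_iff M Sₘ).mp hz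
  dsimp only at hxs
  have hunit : IsUnit (algebraMap S Sₘ (s * σ s)) :=
    IsLocalization.map_units Sₘ (⟨_, mul_mem s.2 (hσM s.2)⟩ : M)
  have hτxs : τ z * algebraMap S Sₘ (σ s) = algebraMap S Sₘ (σ x) := by
    rw [← hτ, ← hτ, ← hxs, map_mul]
  have hxσx : algebraMap S Sₘ (x * σ x) ∈ (Ideal.span ((fun x => x * σ x) '' I)).map
      (algebraMap S Sₘ) := Ideal.mem_map_of_mem _ (Ideal.subset_span ⟨x, x.2, rfl⟩)
  rw [← Ideal.mul_unit_mem_iff_mem _ hunit]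
  convert hxσx using 1
  rw [map_mul, map_mul, ← hxs, ← hτxs]
  ring

section Dedekind

variable {A B : Type*} [CommRing A] [IsDedekindDomain A] [CommRing B] [IsDedekindDomain B]
  [Algebra A B] [Module.IsTorsionFree A B] [Module.Finite A B]

theorem Ideal.span_image_mul_apply_eq_mul_map (hA : ¬ IsField A) (σ : B ≃ₐ[A] B) (I : Ideal B) :
    Ideal.span ((fun x => x * σ x) '' I) = I * I.map σ := by
  refine le_antisymm (Ideal.span_le.mpr ?_)
    (Ideal.le_of_localization_algebraMapSubmonoid_maximal (R := A) fun P _ => ?_)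
  · rintro _ ⟨x, hx, rfl⟩
    exact Ideal.mul_mem_mul hx (Ideal.mem_map_of_mem σ hx)
  set M := Algebra.algebraMapSubmonoid B P.primeCompl
  have hM : M ≤ B⁰ := map_le_nonZeroDivisors_of_injective _
    (FaithfulSMul.algebraMap_injective A B) P.primeCompl_le_nonZeroDivisors
  have : IsDomain (Localization M) := IsLocalization.isDomain_localization hM
  have : IsDedekindDomain (Localization M) := IsLocalization.isDedekindDomain B hM _
  have : IsPrincipalIdealRing (Localization M) :=
    IsDedekindDomain.isPrincipalIdealRing_localization_over_prime B P (Sₚ := Localization M)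
      (Ideal.bot_lt_of_maximal P hA).ne'
  have hσM : M ≤ M.comap (σ : B →+* B) := by
    rintro _ ⟨r, hr, rfl⟩
    exact ⟨r, hr, (σ.commutes r).symm⟩
  let τ : Localization M →+* Localization M :=
    IsLocalization.map (Localization M) (σ : B →+* B) hσM
  have hτ : ∀ x, τ (algebraMap B _ x) = algebraMap B _ (σ x) := IsLocalization.map_eq hσM
  have hmap : (I.map σ).map (algebraMap B (Localization M)) =
      (I.map (algebraMap B (Localization M))).map τ := by
    rw [← Ideal.map_coe σ, Ideal.map_map, Ideal.map_map]
    congr 1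
    exact RingHom.ext fun x => (hτ x).symm
  rw [Ideal.map_mul, hmap]
  exact Ideal.mul_map_le_of_isPrincipal τ (IsPrincipalIdealRing.principal _) fun z hz =>
    IsLocalization.mul_apply_mem_map_span_image M σ τ hσM hτ hz

theorem Ideal.exists_mul_map_eq_map_algebraMap (hA : ¬ IsField A) (σ : B ≃ₐ[A] B)
    (hσσ : ∀ x, σ (σ x) = x) (hfix : ∀ x, σ x = x → x ∈ Set.range (algebraMap A B))
    (I : Ideal B) : ∃ J : Ideal A, I * I.map σ = J.map (algebraMap A B) := by
  refine ⟨Ideal.span (algebraMap A B ⁻¹' ((fun x => x * σ x) '' I)), ?_⟩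
  rw [Ideal.map_span, Set.image_preimage_eq_of_subset, Ideal.span_image_mul_apply_eq_mul_map hA]
  rintro _ ⟨x, -, rfl⟩
  exact hfix _ (by rw [map_mul, hσσ, mul_comm])

end Dedekind

theorem ClassGroup.mk0_pow_eq_one_of_eq_map {R S : Type*} [CommRing R] [IsDedekindDomain R]
    [CommRing S] [IsDedekindDomain S] (f : R →+* S) {I : (Ideal R)⁰} {J : (Ideal S)⁰}
    (hJ : (J : Ideal S) = (I : Ideal R).map f) {n : ℕ} (h : ClassGroup.mk0 I ^ n = 1) :
    ClassGroup.mk0 J ^ n = 1 := by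
  rw [← map_pow, ClassGroup.mk0_eq_one_iff, SubmonoidClass.coe_pow] at h ⊢
  rw [hJ, ← Ideal.map_pow]
  exact h.map_ringHom f

section Galois

variable (A K L B : Type*) [CommRing A] [CommRing B] [Field K] [Field L]
  [Algebra A K] [Algebra B L] [IsFractionRing A K] [Algebra A B] [Algebra K L] [Algebra A L]
  [IsScalarTower A K L] [IsScalarTower A B L] [IsIntegralClosure B A L] [FiniteDimensional K L]
  [IsGalois K L]

theorem galRestrict_apply_apply_of_finrank_eq_two (hdeg : Module.finrank K L = 2)
    (τ : Gal(L/K)) (x : B) : galRestrict A K L B τ (galRestrict A K L B τ x) = x := by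
  have hτ2 : τ * τ = 1 := by
    rw [← pow_two, ← hdeg, ← IsGalois.card_aut_eq_finrank, pow_card_eq_one']
  rw [← AlgEquiv.mul_apply, ← map_mul, hτ2, map_one, AlgEquiv.one_apply]

theorem mem_range_algebraMap_of_galRestrict_apply_eq [IsFractionRing B L] [IsIntegrallyClosed A]
    (hdeg : Module.finrank K L = 2) {τ : Gal(L/K)} (hτ : τ ≠ 1) {x : B}
    (hx : galRestrict A K L B τ x = x) :
    x ∈ Set.range (algebraMap A B) := by
  let := IsIntegralClosure.MulSemiringAction A K L B
  have hcard : Nat.card Gal(L/K) = 2 := by rw [IsGalois.card_aut_eq_finrank, hdeg]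
  refine (Algebra.isInvariant_of_isGalois A K L B).isInvariant x fun ρ => ?_
  have hτx : τ ∈ MulAction.stabilizer Gal(L/K) x := hx
  exact Subgroup.zpowers_le.mpr hτx (mem_zpowers_of_prime_card hcard hτ)

end Galois

/-- For a quadratic Galois extension `F/k` of number fields with
nontrivial automorphism `τ`, and a prime `p` not dividing the class number of `k`,
`τ` inverts the ideal classes of `F` of `p`-power order: `[I]·[τ(I)] = 1`. -/
theorem stmt_4 (k F : Type*) [Field k] [Field F] [NumberField k] [NumberField F]
    [Algebra k F] [IsGalois k F] (hdeg : Module.finrank k F = 2)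
    (τ : F ≃ₐ[k] F) (hτ : τ ≠ 1)
    (p : ℕ) (hp : p.Prime) (hpcl : ¬ p ∣ NumberField.classNumber k)
    (I : (Ideal (𝓞 F))⁰) (hIord : ∃ n : ℕ, orderOf (ClassGroup.mk0 I) = p ^ n)
    (J : (Ideal (𝓞 F))⁰)
    (hJ : (J : Ideal (𝓞 F)) =
      Ideal.map (galRestrict (𝓞 k) k F (𝓞 F) τ) (I : Ideal (𝓞 F))) :
    ClassGroup.mk0 I * ClassGroup.mk0 J = 1 := by
  obtain ⟨n, hn⟩ := hIord
  obtain ⟨J₀, hJ₀⟩ := Ideal.exists_mul_map_eq_map_algebraMap (RingOfIntegers.not_isField k)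
    (galRestrict (𝓞 k) k F (𝓞 F) τ) (galRestrict_apply_apply_of_finrank_eq_two _ _ _ _ hdeg τ)
    (fun _ => mem_range_algebraMap_of_galRestrict_apply_eq _ _ _ _ hdeg hτ) I
  have hIJ : ((I * J : (Ideal (𝓞 F))⁰) : Ideal (𝓞 F)) = J₀.map (algebraMap (𝓞 k) (𝓞 F)) := by
    rw [Submonoid.coe_mul, hJ, hJ₀]
  have hJ₀_mem : J₀ ∈ (Ideal (𝓞 k))⁰ := by
    refine mem_nonZeroDivisors_of_ne_zero fun h => nonZeroDivisors.coe_ne_zero (I * J) ?_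
    rw [hIJ, h]
    exact Ideal.map_bot
  have hpow_p : (ClassGroup.mk0 I * ClassGroup.mk0 J) ^ p ^ n = 1 := by
    have hI : ClassGroup.mk0 I ^ p ^ n = 1 := hn ▸ pow_orderOf_eq_one _
    rw [mul_pow, hI, ClassGroup.mk0_pow_eq_one_of_eq_map _ hJ hI, one_mul]
  have hpow_h : (ClassGroup.mk0 I * ClassGroup.mk0 J) ^ classNumber k = 1 := by
    rw [← map_mul]
    exact ClassGroup.mk0_pow_eq_one_of_eq_map (I := ⟨J₀, hJ₀_mem⟩) _ hIJ pow_card_eq_one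
  have hcop : Nat.Coprime (p ^ n) (classNumber k) := (hp.coprime_iff_not_dvd.mpr hpcl).pow_left n
  have h := pow_gcd_eq_one.mpr ⟨hpow_p, hpow_h⟩
  rwa [hcop.gcd_eq_one, pow_one] at h
end

section
/- Let K be a number field and let n, e, f ∈ K with f ≠ 0 be such that n is not a square in K and n·(e² − f²n) is a square in K. Then the polynomial P(X) = X⁴ − 2eX² + (e² − f²n) is irreducible over K, and the splitting field F of P over K is a cyclic quartic extension of K: F/K is Galois of degree 4 with cyclic Galois group. -/
/-!
Let `α` be a root of `P` in its splitting field. Then `s = (α² - e)/f` is a square root of `n`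
with `α² = e + fs`, and with `c² = n(e² - f²n)` the element `β = cs/(nα)` is a root with
`β² = e - fs`; so the roots `±α, ±β` all lie in `K(α)`. Since the norm `e² - f²n` of `e + fs` is
not a square in `K`, `e + fs` is not a square in `K(√n)`, which forces `[K(α) : K] = 4` and makes
`P` the minimal polynomial of `α`. An automorphism with `α ↦ β` sends `√n ↦ -√n` and `β ↦ -α`,
so it has order 4.
-/

open Polynomial IntermediateField

noncomputable def quarticPoly (K : Type*) [Field K] (n e f : K) : Polynomial K :=
  X ^ 4 - C (2 * e) * X ^ 2 + C (e ^ 2 - f ^ 2 * n)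

section SquareClass

variable {K : Type*} [Field K] {n d e f : K}

theorem sq_sub_sq_mul_ne_zero (hf : f ≠ 0) (hn : ¬IsSquare n) : e ^ 2 - f ^ 2 * n ≠ 0 := by
  intro h
  exact hn ⟨e / f, by field_simp; linear_combination -h⟩

theorem not_isSquare_of_isSquare_mul (hn : ¬IsSquare n) (hd : d ≠ 0) (hnd : IsSquare (n * d)) :
    ¬IsSquare d :=
  fun hsq ↦ hn (by simpa [hd] using hnd.div hsq)

end SquareClass

section QuadraticSubfield

variable {K L : Type*} [Field K] [Field L] [Algebra K L] {n : K} {s : L}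

theorem minpoly_eq_X_sq_sub_C (hn : ¬IsSquare n) (hs : s ^ 2 = algebraMap K L n) :
    minpoly K s = X ^ 2 - C n := by
  have hirr : Irreducible (X ^ 2 - C n) :=
    X_pow_sub_C_irreducible_of_prime Nat.prime_two fun b hb ↦ hn ⟨b, by rw [← hb, sq]⟩
  refine (minpoly.eq_of_irreducible_of_monic hirr ?_ (monic_X_pow_sub_C n two_ne_zero)).symm
  simp [hs]

theorem isIntegral_of_sq_eq (hs : s ^ 2 = algebraMap K L n) : IsIntegral K s :=
  ⟨X ^ 2 - C n, monic_X_pow_sub_C n two_ne_zero, by rw [← aeval_def]; simp [hs]⟩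

theorem finrank_adjoin_of_sq_eq (hn : ¬IsSquare n) (hs : s ^ 2 = algebraMap K L n) :
    Module.finrank K K⟮s⟯ = 2 := by
  rw [adjoin.finrank (isIntegral_of_sq_eq hs), minpoly_eq_X_sq_sub_C hn hs, natDegree_X_pow_sub_C]

theorem eq_zero_of_add_mul_sqrt_eq_zero (hn : ¬IsSquare n) (hs : s ^ 2 = algebraMap K L n)
    {a b : K} (h : algebraMap K L a + algebraMap K L b * s = 0) : a = 0 ∧ b = 0 := by
  have hb : b = 0 := by
    by_contra hb
    refine hn ⟨-a / b, (algebraMap K L).injective ?_⟩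
    have hs' : s = -algebraMap K L a / algebraMap K L b := by
      rw [eq_div_iff (by simpa using hb)]
      linear_combination h
    rw [← hs, hs']
    simp [sq]
  subst hb
  exact ⟨by simpa using h, rfl⟩

theorem exists_eq_add_mul_sqrt_of_mem_adjoin (hn : ¬IsSquare n) (hs : s ^ 2 = algebraMap K L n)
    {t : L} (ht : t ∈ K⟮s⟯) : ∃ u v : K, t = algebraMap K L u + algebraMap K L v * s := by
  let pb := adjoin.powerBasis (isIntegral_of_sq_eq hs)
  obtain ⟨g, hg, hgt⟩ := pb.exists_eq_aeval ⟨t, ht⟩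
  rw [adjoin.powerBasis_dim, minpoly_eq_X_sq_sub_C hn hs, natDegree_X_pow_sub_C] at hg
  refine ⟨g.coeff 0, g.coeff 1, ?_⟩
  have : t = aeval s g := by
    simpa [pb, aeval_algHom_apply] using congrArg (algebraMap K⟮s⟯ L) hgt
  rw [this]
  conv_lhs => rw [eq_X_add_C_of_natDegree_le_one (by omega : g.natDegree ≤ 1)]
  simp only [map_add, map_mul, aeval_X, aeval_C]
  ring

theorem notMem_adjoin_of_sq_eq_add_mul {e f : K} {α : L} (hn : ¬IsSquare n)
    (hs : s ^ 2 = algebraMap K L n) (hd : ¬IsSquare (e ^ 2 - f ^ 2 * n))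
    (hα : α ^ 2 = algebraMap K L e + algebraMap K L f * s) : α ∉ K⟮s⟯ := by
  intro hmem
  obtain ⟨u, v, rfl⟩ := exists_eq_add_mul_sqrt_of_mem_adjoin hn hs hmem
  obtain ⟨he, hf⟩ := eq_zero_of_add_mul_sqrt_eq_zero hn hs (a := u ^ 2 + v ^ 2 * n - e)
    (b := 2 * u * v - f) (by
      simp only [map_sub, map_add, map_mul, map_pow, map_ofNat]
      linear_combination hα - (algebraMap K L v) ^ 2 * hs)
  -- `(u + v√n)² = e + f√n` makes `e² - f²n = (u² - v²n)²` the norm of a square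
  exact hd ⟨u ^ 2 - v ^ 2 * n, by
    linear_combination (-(e + u ^ 2 + v ^ 2 * n)) * he + n * (f + 2 * u * v) * hf⟩

end QuadraticSubfield

section QuarticRoots

variable {K L : Type*} [Field K] [Field L] [Algebra K L] {n e f : K} {s α β x : L}

theorem quarticPoly_monic (n e f : K) : (quarticPoly K n e f).Monic := by
  unfold quarticPoly; monicity!

theorem quarticPoly_natDegree (n e f : K) : (quarticPoly K n e f).natDegree = 4 := by
  unfold quarticPoly; compute_degree!

theorem aeval_quarticPoly (x : L) :
    aeval x (quarticPoly K n e f) =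
      x ^ 4 - 2 * algebraMap K L e * x ^ 2 +
        (algebraMap K L e ^ 2 - algebraMap K L f ^ 2 * algebraMap K L n) := by
  simp only [quarticPoly, map_add, map_sub, map_mul, map_pow, aeval_X, aeval_C, map_ofNat]

theorem aeval_quarticPoly_eq_mul (hs : s ^ 2 = algebraMap K L n) (x : L) :
    aeval x (quarticPoly K n e f) =
      (x ^ 2 - (algebraMap K L e + algebraMap K L f * s)) *
        (x ^ 2 - (algebraMap K L e - algebraMap K L f * s)) := by
  rw [aeval_quarticPoly, ← hs]; ring

theorem add_mul_sqrt_mul_sub_mul_sqrt (hs : s ^ 2 = algebraMap K L n) :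
    (algebraMap K L e + algebraMap K L f * s) * (algebraMap K L e - algebraMap K L f * s) =
      algebraMap K L (e ^ 2 - f ^ 2 * n) := by
  simp only [map_sub, map_mul, map_pow, ← hs]; ring

theorem add_mul_sqrt_ne_zero (hs : s ^ 2 = algebraMap K L n) (hd : e ^ 2 - f ^ 2 * n ≠ 0) :
    algebraMap K L e + algebraMap K L f * s ≠ 0 :=
  left_ne_zero_of_mul <|
    (add_mul_sqrt_mul_sub_mul_sqrt hs).trans_ne ((_root_.map_ne_zero _).mpr hd)

theorem sub_mul_sqrt_ne_zero (hs : s ^ 2 = algebraMap K L n) (hd : e ^ 2 - f ^ 2 * n ≠ 0) :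
    algebraMap K L e - algebraMap K L f * s ≠ 0 :=
  right_ne_zero_of_mul <|
    (add_mul_sqrt_mul_sub_mul_sqrt hs).trans_ne ((_root_.map_ne_zero _).mpr hd)

theorem exists_sqrt_of_aeval_quarticPoly_eq_zero (hf : f ≠ 0)
    (hα : aeval α (quarticPoly K n e f) = 0) :
    ∃ s ∈ K⟮α⟯, s ^ 2 = algebraMap K L n ∧ α ^ 2 = algebraMap K L e + algebraMap K L f * s := by
  have hf' : algebraMap K L f ≠ 0 := by simpa using hf
  refine ⟨(α ^ 2 - algebraMap K L e) / algebraMap K L f, ?_, ?_, by field_simp; ring⟩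
  · exact div_mem (sub_mem (pow_mem (mem_adjoin_simple_self K α) 2)
      (IntermediateField.algebraMap_mem _ e)) (IntermediateField.algebraMap_mem _ f)
  · rw [aeval_quarticPoly] at hα
    field_simp
    linear_combination hα

theorem exists_conj_root_of_aeval_quarticPoly_eq_zero {c : K} (hn : n ≠ 0)
    (hd : e ^ 2 - f ^ 2 * n ≠ 0) (hc : n * (e ^ 2 - f ^ 2 * n) = c * c)
    (hs : s ^ 2 = algebraMap K L n) (hsα : s ∈ K⟮α⟯)
    (hα : α ^ 2 = algebraMap K L e + algebraMap K L f * s) :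
    ∃ β ∈ K⟮α⟯, β ^ 2 = algebraMap K L e - algebraMap K L f * s ∧
      algebraMap K L n * α * β = algebraMap K L c * s := by
  have hn' : algebraMap K L n ≠ 0 := by simpa using hn
  have hα0 : α ≠ 0 := ne_zero_pow two_ne_zero (hα ▸ add_mul_sqrt_ne_zero hs hd)
  refine ⟨algebraMap K L c * s / (algebraMap K L n * α), ?_, ?_, ?_⟩
  · exact div_mem (mul_mem (IntermediateField.algebraMap_mem _ c) hsα)
      (mul_mem (IntermediateField.algebraMap_mem _ n) (mem_adjoin_simple_self K α))
  · have hc' := congrArg (algebraMap K L) hc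
    simp only [map_mul, map_sub, map_pow] at hc'
    field_simp
    linear_combination (algebraMap K L c ^ 2 + algebraMap K L n ^ 2 * algebraMap K L f ^ 2) * hs -
      algebraMap K L n * hc' -
      algebraMap K L n ^ 2 * (algebraMap K L e - algebraMap K L f * s) * hα
  · field_simp

theorem eq_or_eq_neg_of_aeval_quarticPoly_eq_zero (hs : s ^ 2 = algebraMap K L n)
    (hα : α ^ 2 = algebraMap K L e + algebraMap K L f * s)
    (hβ : β ^ 2 = algebraMap K L e - algebraMap K L f * s)
    (hx : aeval x (quarticPoly K n e f) = 0) : (x = α ∨ x = -α) ∨ (x = β ∨ x = -β) := by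
  rwa [aeval_quarticPoly_eq_mul hs, ← hα, ← hβ, mul_eq_zero, sub_eq_zero, sub_eq_zero,
    sq_eq_sq_iff_eq_or_eq_neg, sq_eq_sq_iff_eq_or_eq_neg] at hx

end QuarticRoots

section Degree

variable {K L : Type*} [Field K] [Field L] [Algebra K L] {n e f : K} {α : L}

theorem isIntegral_of_aeval_quarticPoly_eq_zero (hα : aeval α (quarticPoly K n e f) = 0) :
    IsIntegral K α :=
  ⟨_, quarticPoly_monic n e f, hα⟩

theorem finrank_adjoin_of_aeval_quarticPoly_eq_zero (hf : f ≠ 0) (hn : ¬IsSquare n)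
    (hd : ¬IsSquare (e ^ 2 - f ^ 2 * n)) (hα : aeval α (quarticPoly K n e f) = 0) :
    Module.finrank K K⟮α⟯ = 4 := by
  obtain ⟨s, hsα, hs, hα2⟩ := exists_sqrt_of_aeval_quarticPoly_eq_zero hf hα
  have hint := isIntegral_of_aeval_quarticPoly_eq_zero hα
  have := adjoin.finiteDimensional hint
  have hle : K⟮s⟯ ≤ K⟮α⟯ := adjoin_simple_le_iff.mpr hsα
  have hle4 : Module.finrank K K⟮α⟯ ≤ 4 := by
    rw [adjoin.finrank hint, ← quarticPoly_natDegree n e f]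
    exact natDegree_le_of_dvd (minpoly.dvd K α hα) (quarticPoly_monic n e f).ne_zero
  have hdvd : 2 ∣ Module.finrank K K⟮α⟯ :=
    finrank_adjoin_of_sq_eq hn hs ▸ finrank_dvd_of_le_right hle
  have hne : Module.finrank K K⟮α⟯ ≠ 2 := fun h ↦
    notMem_adjoin_of_sq_eq_add_mul hn hs hd hα2 <|
      eq_of_le_of_finrank_eq hle (by rw [h, finrank_adjoin_of_sq_eq hn hs]) ▸
        mem_adjoin_simple_self K α
  have hpos : 0 < Module.finrank K K⟮α⟯ := Module.finrank_pos
  omega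

theorem minpoly_eq_quarticPoly (hf : f ≠ 0) (hn : ¬IsSquare n)
    (hd : ¬IsSquare (e ^ 2 - f ^ 2 * n)) (hα : aeval α (quarticPoly K n e f) = 0) :
    minpoly K α = quarticPoly K n e f := by
  have hint := isIntegral_of_aeval_quarticPoly_eq_zero hα
  refine (eq_of_monic_of_dvd_of_natDegree_le (minpoly.monic hint) (quarticPoly_monic n e f)
    (minpoly.dvd K α hα) ?_).symm
  rw [quarticPoly_natDegree, ← adjoin.finrank hint,
    finrank_adjoin_of_aeval_quarticPoly_eq_zero hf hn hd hα]

end Degree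

theorem IntermediateField.eq_top_of_rootSet_subset {K L : Type*} [Field K] [Field L]
    [Algebra K L] {p : K[X]} [IsSplittingField K L p] {E : IntermediateField K L}
    (h : p.rootSet L ⊆ E) : E = ⊤ := by
  rw [eq_top_iff]
  intro x _
  have hx : x ∈ (⊤ : Subalgebra K L) := Algebra.mem_top
  rw [← IsSplittingField.adjoin_rootSet L p] at hx
  exact Algebra.adjoin_le (S := E.toSubalgebra) h hx

section SplittingField

variable {K : Type*} (L : Type*) [Field K] [Field L] [Algebra K L] {n e f : K}

theorem exists_aeval_quarticPoly_eq_zero [IsSplittingField K L (quarticPoly K n e f)] :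
    ∃ α : L, aeval α (quarticPoly K n e f) = 0 := by
  obtain ⟨α, hα⟩ := (IsSplittingField.splits L (quarticPoly K n e f)).exists_eval_eq_zero
    (by rw [degree_map, degree_eq_natDegree (quarticPoly_monic n e f).ne_zero,
      quarticPoly_natDegree]; decide)
  exact ⟨α, by rwa [eval_map, ← aeval_def] at hα⟩

variable {L} {s α β : L}

theorem adjoin_eq_top_of_aeval_quarticPoly_eq_zero [IsSplittingField K L (quarticPoly K n e f)]
    (hs : s ^ 2 = algebraMap K L n) (hα : α ^ 2 = algebraMap K L e + algebraMap K L f * s)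
    (hβ : β ^ 2 = algebraMap K L e - algebraMap K L f * s) (hβα : β ∈ K⟮α⟯) : K⟮α⟯ = ⊤ :=
  eq_top_of_rootSet_subset (p := quarticPoly K n e f) fun x hx ↦ by
    rcases eq_or_eq_neg_of_aeval_quarticPoly_eq_zero hs hα hβ (mem_rootSet.mp hx).2 with
      (h | h) | (h | h) <;> rw [h]
    exacts [mem_adjoin_simple_self K α, neg_mem (mem_adjoin_simple_self K α), hβα, neg_mem hβα]

-- `σ` swaps `√n ↦ -√n`, so it acts on the roots as the 4-cycle `α ↦ β ↦ -α ↦ -β`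
theorem algEquiv_sq_ne_one [CharZero L] {c : K} (σ : L ≃ₐ[K] L) (hf : f ≠ 0) (hn : n ≠ 0)
    (hd : e ^ 2 - f ^ 2 * n ≠ 0) (hs : s ^ 2 = algebraMap K L n)
    (hα : α ^ 2 = algebraMap K L e + algebraMap K L f * s)
    (hβ : β ^ 2 = algebraMap K L e - algebraMap K L f * s)
    (hαβ : algebraMap K L n * α * β = algebraMap K L c * s) (hσ : σ α = β) : σ ^ 2 ≠ 1 := by
  have hα0 : α ≠ 0 := ne_zero_pow two_ne_zero (hα ▸ add_mul_sqrt_ne_zero hs hd)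
  have hβ0 : β ≠ 0 := ne_zero_pow two_ne_zero (hβ ▸ sub_mul_sqrt_ne_zero hs hd)
  have hσs : σ s = -s := by
    have h := congrArg σ hα
    simp only [map_pow, map_add, map_mul, AlgEquiv.commutes, hσ, hβ] at h
    exact mul_left_cancel₀ (show algebraMap K L f ≠ 0 by simpa using hf)
      (by linear_combination -h)
  have hσβ : σ β = -α := by
    have h := congrArg σ hαβ
    simp only [map_mul, AlgEquiv.commutes, hσ, hσs] at h
    exact mul_left_cancel₀ (mul_ne_zero (show algebraMap K L n ≠ 0 by simpa using hn) hβ0)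
      (by linear_combination h + hαβ)
  intro h
  have h2 : σ (σ α) = α := by rw [← AlgEquiv.mul_apply, ← sq, h, AlgEquiv.one_apply]
  rw [hσ, hσβ, CharZero.neg_eq_self_iff] at h2
  exact hα0 h2

end SplittingField

theorem isCyclic_of_natCard_eq_four {G : Type*} [Group G] (hG : Nat.card G = 4) {g : G}
    (hg : g ^ 2 ≠ 1) : IsCyclic G := by
  have : Finite G := Nat.finite_of_card_ne_zero (by omega)
  refine isCyclic_of_orderOf_eq_card g (hG ▸ orderOf_eq_prime_pow (p := 2) (n := 1) hg ?_)
  rw [show 2 ^ (1 + 1) = Nat.card G by omega]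
  exact pow_card_eq_one'

/-- Lemma 3.1(ii). If `n, e, f ∈ K`, `f ≠ 0`, `n` is not a square in
`K`, and `n(e² - f²n)` is a square in `K`, then `P = X⁴ - 2eX² + (e² - f²n)` is
irreducible over `K` and its splitting field is a cyclic quartic extension of `K`. -/
theorem stmt_6 (K : Type*) [Field K] [NumberField K] (n e f : K) (hf : f ≠ 0)
    (hn : ¬ IsSquare n) (hsq : IsSquare (n * (e ^ 2 - f ^ 2 * n))) :
    Irreducible (quarticPoly K n e f) ∧
    IsGalois K (quarticPoly K n e f).SplittingField ∧
    Module.finrank K (quarticPoly K n e f).SplittingField = 4 ∧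
    IsCyclic ((quarticPoly K n e f).SplittingField ≃ₐ[K]
      (quarticPoly K n e f).SplittingField) := by
  set P := quarticPoly K n e f
  set F := P.SplittingField
  have hn0 : n ≠ 0 := fun h ↦ hn (h ▸ IsSquare.zero)
  have hd0 : e ^ 2 - f ^ 2 * n ≠ 0 := sq_sub_sq_mul_ne_zero hf hn
  have hd := not_isSquare_of_isSquare_mul hn hd0 hsq
  obtain ⟨c, hc⟩ := hsq
  obtain ⟨α, hα⟩ := exists_aeval_quarticPoly_eq_zero F (n := n) (e := e) (f := f)
  obtain ⟨s, hsα, hs, hα2⟩ := exists_sqrt_of_aeval_quarticPoly_eq_zero hf hα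
  obtain ⟨β, hβα, hβ2, hαβ⟩ :=
    exists_conj_root_of_aeval_quarticPoly_eq_zero hn0 hd0 hc hs hsα hα2
  have hfin : Module.finrank K F = 4 := by
    rw [← finrank_top', ← adjoin_eq_top_of_aeval_quarticPoly_eq_zero hs hα2 hβ2 hβα,
      finrank_adjoin_of_aeval_quarticPoly_eq_zero hf hn hd hα]
  have hPα : minpoly K α = P := minpoly_eq_quarticPoly hf hn hd hα
  have : IsGalois K F := ⟨⟩
  refine ⟨hPα ▸ minpoly.irreducible (isIntegral_of_aeval_quarticPoly_eq_zero hα), inferInstance,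
    hfin, ?_⟩
  have hβ : aeval β P = 0 := by rw [aeval_quarticPoly_eq_mul hs, hβ2, sub_self, mul_zero]
  obtain ⟨σ, hσ : σ α = β⟩ := (Normal.minpoly_eq_iff_mem_orbit (F := K) (E := F)).mp
    ((minpoly_eq_quarticPoly hf hn hd hβ).trans hPα.symm)
  exact isCyclic_of_natCard_eq_four (by rw [IsGalois.card_aut_eq_finrank, hfin])
    (algEquiv_sq_ne_one σ hf hn0 hd0 hs hα2 hβ2 hαβ hσ)
end

section
/- Let d ≠ 1 be a squarefree integer not divisible by 5, let ζ₅ = exp(2πi/5) ∈ ℂ, and fix s ∈ ℂ with s² = d. Then the minimal polynomial over ℚ of the algebraic number α = (ζ₅ − ζ₅⁻¹)·s ∈ ℂ is X⁴ + 5d·X² + 5d²; in particular, this quartic polynomial is irreducible over ℚ and α⁴ + 5d·α² + 5d² = 0. -/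
/-!
Write `t = ζ₅ - ζ₅⁻¹` and `u = ζ₅² + ζ₅⁻²`. Then `t² = u - 2` and `u² + u - 1` is the vanishing
sum of all fifth roots of unity, so `t⁴ + 5t² + 5 = u² + u - 1 = 0`; hence `α = t·s` with
`s² = d` is a root of `X⁴ + 5dX² + 5d²`. This quartic is `5`-Eisenstein because `5 ∤ d`, so it
is irreducible over `ℤ`, hence over `ℚ` by Gauss's lemma, and being monic it is the minimal
polynomial of `α`.
-/

open Polynomial

theorem IsPrimitiveRoot.sub_inv_pow_four_add_five_mul_sq_add_five {K : Type*} [Field K] {ζ : K}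
    (hζ : IsPrimitiveRoot ζ 5) : (ζ - ζ⁻¹) ^ 4 + 5 * (ζ - ζ⁻¹) ^ 2 + 5 = 0 := by
  have hpow : ζ ^ 5 = 1 := hζ.pow_eq_one
  have hsum : ∑ i ∈ Finset.range 5, ζ ^ i = 0 := hζ.geom_sum_eq_zero (by norm_num)
  simp only [Finset.sum_range_succ, Finset.sum_range_zero] at hsum
  have hinv : ζ⁻¹ = ζ ^ 4 := inv_eq_of_mul_eq_one_right (by rw [← pow_succ', hpow])
  have hsq : (ζ - ζ⁻¹) ^ 2 = ζ ^ 2 + ζ ^ 3 - 2 := by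
    rw [hinv]
    linear_combination (ζ ^ 3 - 2) * hpow
  linear_combination ((ζ - ζ⁻¹) ^ 2 + ζ ^ 2 + ζ ^ 3 + 3) * hsq + hsum + (ζ + 2) * hpow

theorem Polynomial.irreducible_X_pow_four_add_C_mul_X_sq_add_C {p d : ℤ} (hp : Prime p)
    (hpd : ¬ p ∣ d) : Irreducible (X ^ 4 + C (p * d) * X ^ 2 + C (p * d ^ 2) : ℤ[X]) := by
  have hmonic : (X ^ 4 + C (p * d) * X ^ 2 + C (p * d ^ 2) : ℤ[X]).Monic := by monicity!
  have hdeg : (X ^ 4 + C (p * d) * X ^ 2 + C (p * d ^ 2) : ℤ[X]).natDegree = 4 := by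
    compute_degree!
  have hprime : (Ideal.span {p}).IsPrime := (Ideal.span_singleton_prime hp.ne_zero).mpr hp
  refine (hmonic.isEisensteinAt_of_mem_of_notMem hprime.ne_top (fun {n} hn => ?_) ?_).irreducible
    hprime hmonic.isPrimitive (by omega)
  · rw [hdeg] at hn
    rw [Ideal.mem_span_singleton]
    interval_cases n <;> simp only [coeff_add, coeff_C_mul, coeff_X_pow, coeff_C] <;> norm_num
  · rw [Ideal.span_singleton_pow, Ideal.mem_span_singleton]
    simp only [coeff_add, coeff_C_mul, coeff_X_pow, coeff_C]
    norm_num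
    rw [sq p, mul_dvd_mul_iff_left hp.ne_zero]
    exact fun h => hpd (hp.dvd_of_dvd_pow h)

theorem Polynomial.irreducible_X_pow_four_add_C_mul_X_sq_add_C_rat {p d : ℤ} (hp : Prime p)
    (hpd : ¬ p ∣ d) :
    Irreducible (X ^ 4 + C ((p : ℚ) * d) * X ^ 2 + C ((p : ℚ) * d ^ 2) : ℚ[X]) := by
  have hmap : (X ^ 4 + C (p * d) * X ^ 2 + C (p * d ^ 2) : ℤ[X]).map (algebraMap ℤ ℚ) =
      X ^ 4 + C ((p : ℚ) * d) * X ^ 2 + C ((p : ℚ) * d ^ 2) := by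
    simp
  rw [← hmap, ← Monic.irreducible_iff_irreducible_map_fraction_map (by monicity!)]
  exact irreducible_X_pow_four_add_C_mul_X_sq_add_C hp hpd

theorem stmt_7_general (d : ℤ) (hd5 : ¬ (5 : ℤ) ∣ d)
    (s : ℂ) (hs : s ^ 2 = (d : ℂ))
    (ζ : ℂ) (hζ : ζ = Complex.exp (2 * Real.pi * Complex.I / 5))
    (α : ℂ) (hα : α = (ζ - ζ⁻¹) * s) :
    minpoly ℚ α = X ^ 4 + C (5 * (d : ℚ)) * X ^ 2 + C (5 * (d : ℚ) ^ 2) ∧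
    Irreducible ((X ^ 4 + C (5 * (d : ℚ)) * X ^ 2 + C (5 * (d : ℚ) ^ 2) : Polynomial ℚ)) ∧
    α ^ 4 + 5 * (d : ℂ) * α ^ 2 + 5 * (d : ℂ) ^ 2 = 0 := by
  have hprim : IsPrimitiveRoot ζ 5 := by
    simpa [hζ, mul_div_assoc] using Complex.isPrimitiveRoot_exp 5 (by norm_num)
  have hroot : α ^ 4 + 5 * (d : ℂ) * α ^ 2 + 5 * (d : ℂ) ^ 2 = 0 := by
    rw [hα]
    linear_combination (d : ℂ) ^ 2 * hprim.sub_inv_pow_four_add_five_mul_sq_add_five +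
      ((ζ - ζ⁻¹) ^ 4 * (s ^ 2 + d) + 5 * d * (ζ - ζ⁻¹) ^ 2) * hs
  have hirr : Irreducible (X ^ 4 + C (5 * (d : ℚ)) * X ^ 2 + C (5 * (d : ℚ) ^ 2)) := by
    exact_mod_cast irreducible_X_pow_four_add_C_mul_X_sq_add_C_rat
      (Int.prime_iff_natAbs_prime.mpr (by norm_num)) hd5
  have haeval : aeval α (X ^ 4 + C (5 * (d : ℚ)) * X ^ 2 + C (5 * (d : ℚ) ^ 2)) = 0 := by
    simpa using hroot
  exact ⟨(minpoly.eq_of_irreducible_of_monic hirr haeval (by monicity!)).symm, hirr, hroot⟩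

/-- Corollary 3.2. For a squarefree integer `d ≠ 1` prime to `5`,
`ζ₅ = exp(2πi/5)` and `s` a complex square root of `d`, the minimal polynomial over `ℚ`
of `α = (ζ₅ - ζ₅⁻¹)·s` is `X⁴ + 5dX² + 5d²`; in particular this polynomial is
irreducible over `ℚ` and `α⁴ + 5dα² + 5d² = 0`. -/
theorem stmt_7 (d : ℤ) (hd1 : d ≠ 1) (hsf : Squarefree d) (hd5 : ¬ (5 : ℤ) ∣ d)
    (s : ℂ) (hs : s ^ 2 = (d : ℂ))
    (ζ : ℂ) (hζ : ζ = Complex.exp (2 * Real.pi * Complex.I / 5))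
    (α : ℂ) (hα : α = (ζ - ζ⁻¹) * s) :
    minpoly ℚ α = X ^ 4 + C (5 * (d : ℚ)) * X ^ 2 + C (5 * (d : ℚ) ^ 2) ∧
    Irreducible ((X ^ 4 + C (5 * (d : ℚ)) * X ^ 2 + C (5 * (d : ℚ) ^ 2) : Polynomial ℚ)) ∧
    α ^ 4 + 5 * (d : ℂ) * α ^ 2 + 5 * (d : ℂ) ^ 2 = 0 :=
  stmt_7_general d hd5 s hs ζ hζ α hα
end

section
/- Let η = (123 + 11·√125)/2 ∈ ℝ. For all integers α ≥ 1 and β ≥ 1, the pair (α, β) satisfies α² − 125β² = 4 together with α + β ≡ 0 (mod 25) if and only if there exists a natural number k ≥ 0 such that α + β·√125 = 2·η^{7+25k}. -/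
/-!
Let `ε = (a + b√d)/2` and let `(xₙ, yₙ)` be the integers with `xₙ + yₙ√d = 2εⁿ`; since `ε` is a
unit of norm `1`, every `(xₙ, yₙ)` solves `x² - d y² = 4`. Conversely, dividing a positive solution
`x + y√d` by `ε` gives a positive solution with smaller `y` (integral because `d` is odd, which
forces `x ≡ y mod 2`), so descent ends at the minimal solution `(a, b)`. For `d = 125` the minimal
solution is `(123, 11)`: any solution has `x ≡ ±2 (mod 125)`, so `y ≤ 10` would force `x = 2`.
Modulo `25` we have `123 ≡ -2`, so `ε` behaves like the double root `-1` of `t² - 123 t + 1`, and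
`xₙ + yₙ ≡ (-1)ⁿ (2 - 11 n)`, which vanishes exactly when `n ≡ 7 (mod 25)`.
-/

def pellSeq (a b : ℤ) : ℕ → ℤ × ℤ
  | 0 => (2, 0)
  | 1 => (a, b)
  | n + 2 => a • pellSeq a b (n + 1) - pellSeq a b n

section PellFour

variable {d a b x y : ℤ}

lemma pellSeq_add_two_fst (n : ℕ) :
    (pellSeq a b (n + 2)).1 = a * (pellSeq a b (n + 1)).1 - (pellSeq a b n).1 := rfl

lemma pellSeq_add_two_snd (n : ℕ) :
    (pellSeq a b (n + 2)).2 = a * (pellSeq a b (n + 1)).2 - (pellSeq a b n).2 := rfl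

lemma two_mul_pellSeq_succ (hab : a ^ 2 - d * b ^ 2 = 4) (n : ℕ) :
    2 * (pellSeq a b (n + 1)).1 = a * (pellSeq a b n).1 + d * b * (pellSeq a b n).2 ∧
    2 * (pellSeq a b (n + 1)).2 = b * (pellSeq a b n).1 + a * (pellSeq a b n).2 := by
  induction n with
  | zero => constructor <;> simp [pellSeq, mul_comm]
  | succ n ih =>
    rw [pellSeq_add_two_fst, pellSeq_add_two_snd]
    constructor <;> apply mul_left_cancel₀ (two_ne_zero' ℤ)
    · linear_combination a * ih.1 - d * b * ih.2 + (pellSeq a b n).1 * hab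
    · linear_combination a * ih.2 - b * ih.1 + (pellSeq a b n).2 * hab

lemma pellSeq_sq_sub_mul_sq (hab : a ^ 2 - d * b ^ 2 = 4) (n : ℕ) :
    (pellSeq a b n).1 ^ 2 - d * (pellSeq a b n).2 ^ 2 = 4 := by
  induction n with
  | zero => simp [pellSeq]
  | succ n ih =>
    obtain ⟨hx, hy⟩ := two_mul_pellSeq_succ hab n
    apply mul_left_cancel₀ (four_ne_zero' ℤ)
    calc 4 * ((pellSeq a b (n + 1)).1 ^ 2 - d * (pellSeq a b (n + 1)).2 ^ 2)
        = (2 * (pellSeq a b (n + 1)).1) ^ 2 - d * (2 * (pellSeq a b (n + 1)).2) ^ 2 := by ring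
      _ = (a ^ 2 - d * b ^ 2) * ((pellSeq a b n).1 ^ 2 - d * (pellSeq a b n).2 ^ 2) := by
        rw [hx, hy]; ring
      _ = 4 * 4 := by rw [hab, ih]

lemma pellSeq_add_mul {K : Type*} [Field K] [CharZero K] {r : K} (hr : r ^ 2 = d)
    (hab : a ^ 2 - d * b ^ 2 = 4) (n : ℕ) :
    ((pellSeq a b n).1 : K) + (pellSeq a b n).2 * r = 2 * ((a + b * r) / 2) ^ n := by
  induction n with
  | zero => simp [pellSeq]
  | succ n ih =>
    obtain ⟨hx, hy⟩ := two_mul_pellSeq_succ hab n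
    have hx' : (2 * (pellSeq a b (n + 1)).1 : K) =
        a * (pellSeq a b n).1 + d * b * (pellSeq a b n).2 := by exact_mod_cast hx
    have hy' : (2 * (pellSeq a b (n + 1)).2 : K) =
        b * (pellSeq a b n).1 + a * (pellSeq a b n).2 := by exact_mod_cast hy
    rw [pow_succ]
    linear_combination hx' / 2 + r * hy' / 2 + (a + b * r) / 2 * ih - b * (pellSeq a b n).2 / 2 * hr

lemma pellSeq_cast_of_eq_neg_two {R : Type*} [CommRing R] (ha : (a : R) = -2) :
    ∀ n : ℕ, ((pellSeq a b n).1 : R) = 2 * (-1) ^ n ∧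
      ((pellSeq a b n).2 : R) = n * b * (-1) ^ (n + 1)
  | 0 => by simp [pellSeq]
  | 1 => by simp [pellSeq, ha]
  | n + 2 => by
    obtain ⟨h₀, h₀'⟩ := pellSeq_cast_of_eq_neg_two ha n
    obtain ⟨h₁, h₁'⟩ := pellSeq_cast_of_eq_neg_two ha (n + 1)
    rw [pellSeq_add_two_fst, pellSeq_add_two_snd]
    push_cast [h₀, h₀', h₁, h₁', ha]
    constructor <;> ring

lemma even_sub_of_sq_sub_mul_sq_eq_four (hd : Odd d) (h : x ^ 2 - d * y ^ 2 = 4) :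
    Even (x - y) := by
  have : Even (x ^ 2 - d * y ^ 2) := h ▸ even_iff_two_dvd.2 (by norm_num)
  simpa [Int.even_sub, Int.even_mul, Int.even_pow, Int.not_even_iff_odd.2 hd] using this

lemma exists_smaller_solution (hd0 : 0 < d) (hd : Odd d) (hab : a ^ 2 - d * b ^ 2 = 4) (ha : 0 < a)
    (hb : 0 < b) (hx : 0 < x) (h : x ^ 2 - d * y ^ 2 = 4) (hby : b < y) :
    ∃ x' y', 2 * x = a * x' + d * b * y' ∧ 2 * y = b * x' + a * y' ∧
      0 < x' ∧ 0 < y' ∧ y' < y ∧ x' ^ 2 - d * y' ^ 2 = 4 := by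
  obtain ⟨k, hk⟩ := even_sub_of_sq_sub_mul_sq_eq_four hd hab
  obtain ⟨l, hl⟩ := even_sub_of_sq_sub_mul_sq_eq_four hd h
  obtain ⟨m, hm⟩ := hd
  obtain ⟨x', hx'⟩ : 2 ∣ a * x - d * b * y :=
    ⟨a * l + k * y - m * b * y, by linear_combination a * hl + y * hk - b * y * hm⟩
  obtain ⟨y', hy'⟩ : 2 ∣ a * y - b * x :=
    ⟨k * x - a * l, by linear_combination x * hk - a * hl⟩
  have ha2 : 2 < a := by nlinarith
  refine ⟨x', y', ?_, ?_, ?_, ?_, ?_, ?_⟩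
  · apply mul_left_cancel₀ (two_ne_zero' ℤ)
    linear_combination a * hx' + d * b * hy' - x * hab
  · apply mul_left_cancel₀ (two_ne_zero' ℤ)
    linear_combination b * hx' + a * hy' - y * hab
  · have : (a * x - d * b * y) * (a * x + d * b * y) = 16 + 4 * d * b ^ 2 + 4 * d * y ^ 2 := by
      linear_combination x ^ 2 * hab + (d * b ^ 2 + 4) * h
    nlinarith [mul_pos ha hx, mul_pos (mul_pos hd0 hb) (hb.trans hby)]
  · have : (a * y - b * x) * (a * y + b * x) = 4 * (y ^ 2 - b ^ 2) := by
      linear_combination y ^ 2 * hab - b ^ 2 * h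
    nlinarith [mul_pos ha (hb.trans hby), mul_pos hb hx]
  · have : (b * x - (a - 2) * y) * (b * x + (a - 2) * y) = 4 * b ^ 2 + 4 * (a - 2) * y ^ 2 := by
      linear_combination b ^ 2 * h - y ^ 2 * hab
    nlinarith [mul_pos (sub_pos.2 ha2) (hb.trans hby), mul_pos hb hx]
  · apply mul_left_cancel₀ (four_ne_zero' ℤ)
    calc 4 * (x' ^ 2 - d * y' ^ 2) = (2 * x') ^ 2 - d * (2 * y') ^ 2 := by ring
      _ = (a ^ 2 - d * b ^ 2) * (x ^ 2 - d * y ^ 2) := by rw [← hx', ← hy']; ring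
      _ = 4 * 4 := by rw [hab, h]

theorem exists_pellSeq_eq (hd0 : 0 < d) (hd : Odd d) (hab : a ^ 2 - d * b ^ 2 = 4) (ha : 0 < a)
    (hb : 0 < b) (hmin : ∀ x y : ℤ, 0 < x → 0 < y → x ^ 2 - d * y ^ 2 = 4 → b ≤ y)
    (hx : 0 < x) (hy : 0 < y) (h : x ^ 2 - d * y ^ 2 = 4) : ∃ n, pellSeq a b n = (x, y) := by
  induction hm : y.toNat using Nat.strong_induction_on generalizing x y with
  | _ m ih =>
    rcases le_or_gt y b with hyb | hby
    · obtain rfl : y = b := le_antisymm hyb (hmin x y hx hy h)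
      obtain rfl : x = a := by nlinarith
      exact ⟨1, rfl⟩
    · obtain ⟨x', y', hx2, hy2, hx', hy', hy'y, h'⟩ :=
        exists_smaller_solution hd0 hd hab ha hb hx h hby
      obtain ⟨n, hn⟩ := ih y'.toNat (by omega) hx' hy' h' rfl
      obtain ⟨hxn, hyn⟩ := two_mul_pellSeq_succ hab n
      rw [hn] at hxn hyn
      exact ⟨n + 1, Prod.ext (by linarith) (by linarith)⟩

end PellFour

lemma Irrational.intCast_add_intCast_mul_inj {r : ℝ} (hr : Irrational r) {x y u v : ℤ}
    (h : (x : ℝ) + y * r = u + v * r) : x = u ∧ y = v := by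
  obtain rfl : y = v := by
    by_contra hyv
    apply hr.ne_rational (u - x) (y - v)
    have : ((y - v : ℤ) : ℝ) ≠ 0 := by exact_mod_cast sub_ne_zero.2 hyv
    field_simp
    push_cast
    linarith
  exact ⟨by exact_mod_cast (add_right_cancel h), rfl⟩

set_option maxRecDepth 2000 in
lemma eleven_le_of_sq_sub_125_mul_sq_eq_four {x y : ℤ} (hx : 0 < x) (hy : 0 < y)
    (h : x ^ 2 - 125 * y ^ 2 = 4) : 11 ≤ y := by
  by_contra! hy11
  have hx123 : x < 123 := by nlinarith
  have hmod : (x : ZMod 125) ^ 2 = 4 := by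
    have := (ZMod.intCast_zmod_eq_zero_iff_dvd (x ^ 2 - 4) 125).2 ⟨y ^ 2, by push_cast; linarith⟩
    push_cast at this
    exact sub_eq_zero.1 this
  have sq_eq_four : ∀ u : ZMod 125, u ^ 2 = 4 → u = 2 ∨ u = -2 := by decide
  rcases sq_eq_four _ hmod with h2 | h2
  · have := (ZMod.intCast_eq_intCast_iff' x 2 125).1 (by simpa using h2)
    obtain rfl : x = 2 := by omega
    nlinarith
  · have := (ZMod.intCast_eq_intCast_iff' x (-2) 125).1 (by simpa using h2)
    omega

lemma twentyfive_dvd_pellSeq_fst_add_snd_iff (n : ℕ) :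
    (25 : ℤ) ∣ (pellSeq 123 11 n).1 + (pellSeq 123 11 n).2 ↔ n % 25 = 7 := by
  obtain ⟨hx, hy⟩ := pellSeq_cast_of_eq_neg_two (R := ZMod 25) (a := 123) (b := 11) (by decide) n
  have hsum : (((pellSeq 123 11 n).1 + (pellSeq 123 11 n).2 : ℤ) : ZMod 25) =
      (-1) ^ n * (2 - 11 * n) := by
    push_cast [hx, hy]
    ring
  have hlin : ∀ u : ZMod 25, 2 - 11 * u = 0 ↔ u = 7 := by decide
  rw [show (25 : ℤ) = (25 : ℕ) by rfl, ← ZMod.intCast_zmod_eq_zero_iff_dvd, hsum,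
    (isUnit_neg_one.pow n).mul_right_eq_zero, hlin]
  simpa using ZMod.natCast_eq_natCast_iff' n 7 25

/-- Remark 3.5. With `η = (123 + 11√125)/2`, the positive integer
pairs `(α, β)` satisfying the Pellian equation `α² − 125β² = 4` together with
`25 ∣ α + β` are exactly those with `α + β√125 = 2·η^(7+25k)` for some `k ≥ 0`. -/
theorem stmt_10 (η : ℝ) (hη : η = (123 + 11 * Real.sqrt 125) / 2) (α β : ℤ)
    (hα : 1 ≤ α) (hβ : 1 ≤ β) :
    (α ^ 2 - 125 * β ^ 2 = 4 ∧ (25 : ℤ) ∣ (α + β)) ↔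
      ∃ k : ℕ, (α : ℝ) + (β : ℝ) * Real.sqrt 125 = 2 * η ^ (7 + 25 * k) := by
  have hab : (123 : ℤ) ^ 2 - 125 * 11 ^ 2 = 4 := by norm_num
  have hpow (n : ℕ) : ((pellSeq 123 11 n).1 : ℝ) + (pellSeq 123 11 n).2 * √125 = 2 * η ^ n := by
    rw [pellSeq_add_mul (r := √125) (by norm_num) hab, hη]
    norm_num
  constructor
  · rintro ⟨h, h25⟩
    obtain ⟨n, hn⟩ := exists_pellSeq_eq (by norm_num) (by decide) hab (by norm_num) (by norm_num)
      (fun _ _ ↦ eleven_le_of_sq_sub_125_mul_sq_eq_four) hα hβ h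
    have h7 := (twentyfive_dvd_pellSeq_fst_add_snd_iff n).1 (by rwa [hn])
    refine ⟨n / 25, ?_⟩
    rw [show 7 + 25 * (n / 25) = n by omega, ← hpow, hn]
  · rintro ⟨k, hk⟩
    rw [← hpow] at hk
    have hirr : Irrational √125 := by norm_num
    obtain ⟨rfl, rfl⟩ := hirr.intCast_add_intCast_mul_inj hk
    exact ⟨pellSeq_sq_sub_mul_sq hab _, (twentyfive_dvd_pellSeq_fst_add_snd_iff _).2 (by omega)⟩
end

section
/- There are infinitely many pairs (α, β) of positive integers with α ≥ 2, β ≥ 2 satisfying simultaneously α² − 125β² = 4 and α + β ≡ 0 (mod 25). -/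
/-!
Let `η = (123 + 11√125)/2`, a unit of norm `1` and trace `123`, and write `2ηⁿ = αₙ + βₙ√125`.
In terms of the Vieta–Lucas and Vieta–Fibonacci polynomials, `αₙ = Cₙ(123)` and
`βₙ = 11 Sₙ₋₁(123)`, so the polynomial identity `Cₙ² - (X² - 4) Sₙ₋₁² = 4` together with
`123² - 4 = 125 · 11²` gives `αₙ² - 125 βₙ² = 4`. Since `123 ≡ -2 (mod 125)`, `Cₙ(-2) = 2 (-1)ⁿ` and
`Sₙ₋₁(-2) = (-1)ⁿ⁻¹ n`, we get `αₙ + βₙ ≡ (-1)ⁿ (2 - 11 n) (mod 125)`, which is divisible by `25`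
as soon as `n ≡ 7 (mod 25)`. Finally `n ↦ Cₙ(123)` is strictly increasing.
-/

open Polynomial Polynomial.Chebyshev

theorem Int.ModEq.polynomial_eval (p : ℤ[X]) {n a b : ℤ} (h : a ≡ b [ZMOD n]) :
    p.eval a ≡ p.eval b [ZMOD n] :=
  Int.modEq_iff_dvd.2 ((Int.modEq_iff_dvd.1 h).trans (sub_dvd_eval_sub b a p))

section Recurrence

variable {R : Type*} [CommRing R] [LinearOrder R] [IsStrictOrderedRing R]

theorem strictMono_of_two_le_of_recurrence {x : ℕ → R} {P : R} (hP : 2 ≤ P)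
    (hrec : ∀ n, x (n + 2) = P * x (n + 1) - x n) (h0 : 0 ≤ x 0) (h01 : x 0 < x 1) :
    StrictMono x := by
  -- `x (n + 2) - x (n + 1) = (x (n + 1) - x n) + (P - 2) * x (n + 1)`
  have increments : ∀ n, 0 ≤ x n ∧ x 1 - x 0 ≤ x (n + 1) - x n := by
    intro n
    induction n with
    | zero => exact ⟨h0, le_rfl⟩
    | succ n ih =>
      have hx : 0 ≤ x (n + 1) := by linarith [ih.1, ih.2]
      refine ⟨hx, ?_⟩
      rw [hrec]
      nlinarith [mul_nonneg (sub_nonneg.2 hP) hx, ih.2]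
  exact strictMono_nat_of_lt_succ fun n => by linarith [(increments n).2]

theorem Polynomial.Chebyshev.strictMono_C_eval {P : R} (hP : 2 < P) :
    StrictMono fun n : ℕ => (C R n).eval P := by
  refine strictMono_of_two_le_of_recurrence hP.le (fun n => ?_) (by simp) (by simpa using hP)
  simp [show ((n + 2 : ℕ) : ℤ) = n + 2 by push_cast; ring, C_add_two]

theorem Polynomial.Chebyshev.strictMono_S_eval {P : R} (hP : 2 ≤ P) :
    StrictMono fun n : ℕ => (S R n).eval P := by
  refine strictMono_of_two_le_of_recurrence hP (fun n => ?_) (by simp) (by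
    simp only [Nat.cast_zero, Nat.cast_one, S_zero, S_one, eval_one, eval_X]; linarith)
  simp [show ((n + 2 : ℕ) : ℤ) = n + 2 by push_cast; ring, S_add_two]

end Recurrence

theorem Polynomial.Chebyshev.C_sq_sub_mul_S_sq (R : Type*) [CommRing R] (n : ℤ) :
    C R n ^ 2 - (X ^ 2 - 4) * S R (n - 1) ^ 2 = 4 := by
  have h := S_sq_add_S_sq R (n - 1)
  rw [sub_add_cancel] at h
  linear_combination (norm := skip) 4 * h
  rw [C_eq_S_sub_X_mul_S]
  ring

noncomputable def etaPair (n : ℤ) : ℤ × ℤ := ((C ℤ n).eval 123, 11 * (S ℤ (n - 1)).eval 123)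

theorem etaPair_pell (n : ℤ) : (etaPair n).1 ^ 2 - 125 * (etaPair n).2 ^ 2 = 4 := by
  have h := congrArg (eval 123) (C_sq_sub_mul_S_sq ℤ n)
  simp only [eval_sub, eval_mul, eval_pow, eval_X, eval_ofNat] at h
  simp only [etaPair]
  linear_combination h

theorem etaPair_add_modEq (n : ℤ) :
    (etaPair n).1 + (etaPair n).2 ≡ n.negOnePow * (2 - 11 * n) [ZMOD 125] := by
  have h : (123 : ℤ) ≡ -2 [ZMOD 125] := by decide
  have hα := h.polynomial_eval (C ℤ n)
  have hβ := (h.polynomial_eval (S ℤ (n - 1))).mul_left 11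
  calc _ ≡ _ [ZMOD 125] := hα.add hβ
    _ = n.negOnePow * (2 - 11 * n) := by
      simp only [C_eval_neg_two, S_eval_neg_two, Int.negOnePow_sub, Int.negOnePow_one]
      push_cast
      ring

theorem dvd_etaPair_add {n : ℤ} (hn : n ≡ 7 [ZMOD 25]) :
    25 ∣ (etaPair n).1 + (etaPair n).2 := by
  obtain ⟨c, hc⟩ := Int.modEq_iff_dvd.1 hn
  have h : 25 ∣ n.negOnePow * (2 - 11 * n) := Dvd.dvd.mul_left ⟨11 * c - 3, by linarith⟩ _
  rw [← Int.modEq_zero_iff_dvd] at h ⊢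
  exact ((etaPair_add_modEq n).of_dvd (by norm_num)).trans h

theorem two_le_etaPair {n : ℕ} (hn : 1 ≤ n) : 2 ≤ (etaPair n).1 ∧ 2 ≤ (etaPair n).2 := by
  obtain ⟨m, rfl⟩ := Nat.exists_eq_add_of_le' hn
  simp only [etaPair, Nat.cast_add, Nat.cast_one, add_sub_cancel_right]
  constructor
  · simpa using (strictMono_C_eval (R := ℤ) (P := 123) (by norm_num)).monotone (Nat.zero_le (m + 1))
  · have := (strictMono_S_eval (R := ℤ) (P := 123) (by norm_num)).monotone (Nat.zero_le m)
    simp only [Nat.cast_zero, S_zero, eval_one] at this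
    linarith

/-- There are infinitely many pairs `(α, β)` of integers with
`α, β ≥ 2`, `α² − 125β² = 4` and `25 ∣ α + β`. -/
theorem stmt_11 :
    {p : ℤ × ℤ | 2 ≤ p.1 ∧ 2 ≤ p.2 ∧ p.1 ^ 2 - 125 * p.2 ^ 2 = 4 ∧
      (25 : ℤ) ∣ (p.1 + p.2)}.Infinite := by
  have hinj : (fun k : ℕ => etaPair (7 + 25 * k : ℕ)).Injective := fun a b hab => by
    have := (strictMono_C_eval (R := ℤ) (P := 123) (by norm_num)).injective (congrArg Prod.fst hab)
    omega
  refine Set.infinite_of_injective_forall_mem hinj fun k => ?_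
  obtain ⟨hα, hβ⟩ := two_le_etaPair (n := 7 + 25 * k) (by omega)
  refine ⟨hα, hβ, etaPair_pell _, dvd_etaPair_add ?_⟩
  exact Int.modEq_iff_dvd.2 ⟨-k, by push_cast; ring⟩
end
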